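/- arXiv:2405.10161 — 2 statements merged into one kernel-verified Lean document; each statement's English description precedes it below -/
import Mathlib

section
/- For every k ≥ 0 and f ≥ 1, the number of lattice paths from (0,0) to (f·k, k) using only steps (1,0) and (0,1) that stay weakly below the line y = x/f equals the Fuss–Catalan number (1/(f·k+1))·binomial((f+1)·k, k). -/
/-- The x-coordinate of the endpoint of a lattice path given as a list of steps. -/
def pathX (l : List (ℕ × ℕ)) : ℕ := (l.map Prod.fst).sum

/-- The y-coordinate of the endpoint of a lattice path given as a list of steps. -/
def pathY (l : List (ℕ × ℕ)) : ℕ := (l.map Prod.snd).sum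

/-- A lattice path starting at the origin with steps in `S`, staying weakly below the
line `y = (m/n)·x` (i.e. `n·b ≤ m·a` at every visited point `(a,b)`), ending at `e`. -/
def IsLatticePath (S : Set (ℕ × ℕ)) (m n : ℕ) (e : ℕ × ℕ) (l : List (ℕ × ℕ)) : Prop :=
  (∀ s ∈ l, s ∈ S) ∧
  (∀ i : ℕ, n * pathY (l.take i) ≤ m * pathX (l.take i)) ∧
  pathX l = e.1 ∧ pathY l = e.2

namespace Fuss

lemma pathX_append (l₁ l₂ : List (ℕ × ℕ)) : pathX (l₁ ++ l₂) = pathX l₁ + pathX l₂ := by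
  simp [pathX]

lemma pathY_append (l₁ l₂ : List (ℕ × ℕ)) : pathY (l₁ ++ l₂) = pathY l₁ + pathY l₂ := by
  simp [pathY]

lemma pathX_single (s : ℕ × ℕ) : pathX [s] = s.1 := by simp [pathX]

lemma pathY_single (s : ℕ × ℕ) : pathY [s] = s.2 := by simp [pathY]

lemma length_eq {l : List (ℕ × ℕ)} (h : ∀ s ∈ l, s ∈ ({(1,0),(0,1)} : Set (ℕ × ℕ))) :
    pathX l + pathY l = l.length := by
  induction l with
  | nil => simp [pathX, pathY]
  | cons s t ih =>
    have hs := h s (List.mem_cons_self ..)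
    have ht := ih fun x hx => h x (List.mem_cons_of_mem _ hx)
    simp only [Set.mem_insert_iff, Set.mem_singleton_iff] at hs
    simp only [pathX, pathY, List.map_cons, List.sum_cons, List.length_cons] at ht ⊢
    rcases hs with h | h <;> subst h <;> omega

/-- The finset of valid lattice paths ending at `(a, b)` below the line `y = x / f`. -/
def D (f : ℕ) : ℕ → ℕ → Finset (List (ℕ × ℕ))
  | 0, 0 => {[]}
  | a+1, 0 => (D f a 0).image (· ++ [(1,0)])
  | 0, _+1 => ∅
  | a+1, b+1 =>
      if f * (b+1) ≤ a+1 then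
        (D f a (b+1)).image (· ++ [(1,0)]) ∪ (D f (a+1) b).image (· ++ [(0,1)])
      else ∅
  termination_by a b => a + b

lemma endpoint_le {f a b : ℕ} {l : List (ℕ × ℕ)}
    (hl : IsLatticePath {(1,0),(0,1)} 1 f (a,b) l) : f * b ≤ a := by
  obtain ⟨_, h2, h3, h4⟩ := hl
  have := h2 l.length
  rwa [List.take_length, h3, h4, one_mul] at this

lemma path_append_step {f a b : ℕ} {l : List (ℕ × ℕ)} {s : ℕ × ℕ}
    (hl : IsLatticePath {(1,0),(0,1)} 1 f (a,b) l) (hs : s ∈ ({(1,0),(0,1)} : Set (ℕ × ℕ)))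
    (hend : f * (b + s.2) ≤ a + s.1) :
    IsLatticePath {(1,0),(0,1)} 1 f (a + s.1, b + s.2) (l ++ [s]) := by
  obtain ⟨h1, h2, h3, h4⟩ := hl
  refine ⟨?_, ?_, ?_, ?_⟩
  · intro x hx
    rcases List.mem_append.mp hx with h | h
    · exact h1 x h
    · simp only [List.mem_singleton] at h; subst h; exact hs
  · intro i
    rcases le_or_gt i l.length with h | h
    · rw [List.take_append_of_le_length h]; exact h2 i
    · rw [List.take_of_length_le (by simp; omega)]
      rw [pathX_append, pathY_append, h3, h4, one_mul]
      simpa [pathX, pathY] using hend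
  · rw [pathX_append, h3]; simp [pathX]
  · rw [pathY_append, h4]; simp [pathY]

lemma path_dropLast {f : ℕ} {l' : List (ℕ × ℕ)} {s : ℕ × ℕ} {e : ℕ × ℕ}
    (hl : IsLatticePath {(1,0),(0,1)} 1 f e (l' ++ [s])) :
    IsLatticePath {(1,0),(0,1)} 1 f (pathX l', pathY l') l' := by
  obtain ⟨h1, h2, _, _⟩ := hl
  refine ⟨fun x hx => h1 x (by simp [hx]), ?_, rfl, rfl⟩
  intro i
  rcases le_or_gt i l'.length with h | h
  · have := h2 i
    rwa [List.take_append_of_le_length h] at this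
  · rw [List.take_of_length_le h.le]
    have := h2 l'.length
    rwa [List.take_append_of_le_length le_rfl, List.take_length] at this

lemma mem_D_iff {f : ℕ} (hf : 1 ≤ f) :
    ∀ (n a b : ℕ), a + b = n → ∀ (l : List (ℕ × ℕ)),
      (l ∈ D f a b ↔ IsLatticePath {(1,0),(0,1)} 1 f (a,b) l) := by
  intro n
  induction n using Nat.strong_induction_on with
  | _ n IH =>
    rintro a b rfl l
    match a, b with
    | 0, 0 =>
      simp only [D, Finset.mem_singleton]
      constructor
      · rintro rfl
        exact ⟨by simp, by simp [pathX, pathY], by simp [pathX], by simp [pathY]⟩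
      · rintro ⟨h1, _, h3, h4⟩
        have := length_eq h1
        rw [h3, h4] at this
        simpa using (List.length_eq_zero_iff.mp (by omega)).symm
    | 0, b+1 =>
      simp only [D, Finset.notMem_empty, false_iff]
      intro hl
      have := endpoint_le hl
      nlinarith
    | a+1, 0 =>
      simp only [D, Finset.mem_image]
      constructor
      · rintro ⟨l', hl', rfl⟩
        have hp := (IH a (by omega) a 0 (by omega) l').mp hl'
        have := path_append_step hp (s := (1,0)) (by simp) (by simp)
        simpa using this
      · intro hl
        obtain ⟨h1, h2, h3, h4⟩ := hl
        have hlen : l.length = a + 1 := by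
          have := length_eq h1; omega
        have hne : l ≠ [] := by
          intro h; rw [h] at hlen; simp at hlen
        obtain ⟨l', s, rfl⟩ : ∃ l' s, l = l' ++ [s] :=
          ⟨l.dropLast, l.getLast hne, (List.dropLast_append_getLast hne).symm⟩
        have hsS : s ∈ ({(1,0),(0,1)} : Set (ℕ × ℕ)) := h1 s (by simp)
        simp only [Set.mem_insert_iff, Set.mem_singleton_iff] at hsS
        have hpl := path_dropLast (e := ((a:ℕ)+1, 0)) ⟨h1, h2, h3, h4⟩
        have hx : pathX l' + s.1 = a + 1 := by
          have := h3; rw [pathX_append, pathX_single] at this; exact this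
        have hy : pathY l' + s.2 = 0 := by
          have := h4; rw [pathY_append, pathY_single] at this; exact this
        rcases hsS with rfl | rfl
        · simp only at hx hy
          refine ⟨l', ?_, rfl⟩
          rw [IH a (by omega) a 0 (by omega) l']
          have hxa : pathX l' = a := by omega
          have hya : pathY l' = 0 := by omega
          rwa [hxa, hya] at hpl
        · simp only at hx hy
          omega
    | a+1, b+1 =>
      by_cases hcond : f * (b+1) ≤ a+1
      · rw [D, if_pos hcond]
        simp only [Finset.mem_union, Finset.mem_image]
        constructor
        · rintro (⟨l', hl', rfl⟩ | ⟨l', hl', rfl⟩)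
          · have hp := (IH (a + (b+1)) (by omega) a (b+1) rfl l').mp hl'
            have := path_append_step hp (by simp) (s := (1,0)) (by simpa using hcond)
            simpa using this
          · have hp := (IH ((a+1) + b) (by omega) (a+1) b rfl l').mp hl'
            have := path_append_step hp (by simp) (s := (0,1)) (by simpa using hcond)
            simpa using this
        · intro hl
          obtain ⟨h1, h2, h3, h4⟩ := hl
          have hlen : l.length = a + b + 2 := by
            have := length_eq h1; omega
          have hne : l ≠ [] := by
            intro h; rw [h] at hlen; simp at hlen
          obtain ⟨l', s, rfl⟩ : ∃ l' s, l = l' ++ [s] :=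
            ⟨l.dropLast, l.getLast hne, (List.dropLast_append_getLast hne).symm⟩
          have hsS : s ∈ ({(1,0),(0,1)} : Set (ℕ × ℕ)) := h1 s (by simp)
          simp only [Set.mem_insert_iff, Set.mem_singleton_iff] at hsS
          have hpl := path_dropLast (e := ((a:ℕ)+1, b+1)) ⟨h1, h2, h3, h4⟩
          have hx : pathX l' + s.1 = a + 1 := by
            have := h3; rw [pathX_append, pathX_single] at this; exact this
          have hy : pathY l' + s.2 = b + 1 := by
            have := h4; rw [pathY_append, pathY_single] at this; exact this
          rcases hsS with rfl | rfl
          · simp only at hx hy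
            left
            refine ⟨l', ?_, rfl⟩
            rw [IH (a + (b+1)) (by omega) a (b+1) rfl l']
            have hxa : pathX l' = a := by omega
            have hya : pathY l' = b + 1 := by omega
            rwa [hxa, hya] at hpl
          · simp only at hx hy
            right
            refine ⟨l', ?_, rfl⟩
            rw [IH ((a+1) + b) (by omega) (a+1) b rfl l']
            have hxa : pathX l' = a + 1 := by omega
            have hya : pathY l' = b := by omega
            rwa [hxa, hya] at hpl
      · rw [D, if_neg hcond]
        simp only [Finset.notMem_empty, false_iff]
        intro hl
        exact hcond (endpoint_le hl)

lemma append_inj (s : ℕ × ℕ) : Function.Injective (· ++ [s] : List (ℕ × ℕ) → _) :=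
  fun _ _ h => List.append_cancel_right h

lemma D_empty {f : ℕ} : ∀ (n a b : ℕ), a + b = n → ¬ f * b ≤ a → D f a b = ∅ := by
  intro n
  induction n using Nat.strong_induction_on with
  | _ n IH =>
    rintro a b rfl h
    match a, b with
    | 0, 0 => omega
    | 0, b+1 => rw [D]
    | a+1, 0 => omega
    | a+1, b+1 =>
      rw [D, if_neg h]

lemma card_D_a0 {f : ℕ} (a : ℕ) : (D f a 0).card = 1 := by
  induction a with
  | zero => rw [D]; simp
  | succ a ih =>
    rw [D, Finset.card_image_of_injective _ (append_inj _), ih]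

lemma disj (s t : Finset (List (ℕ × ℕ))) :
    Disjoint (s.image (· ++ [(1,0)])) (t.image (· ++ [(0,1)])) := by
  rw [Finset.disjoint_left]
  rintro x hx hx'
  simp only [Finset.mem_image] at hx hx'
  obtain ⟨u, _, hu⟩ := hx
  obtain ⟨v, _, hv⟩ := hx'
  have h := hu.trans hv.symm
  have h1 := congrArg List.getLast? h
  simp [List.getLast?_concat] at h1

lemma card_D {f : ℕ} (hf : 1 ≤ f) :
    ∀ (n a b : ℕ), a + b = n → f * (b+1) ≤ a →
      (D f a (b+1)).card + f * Nat.choose (a+b+1) b = Nat.choose (a+b+1) (b+1) := by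
  intro n
  induction n using Nat.strong_induction_on with
  | _ n IH =>
    rintro a b rfl hab
    match a, b with
    | 0, b =>
      have : 1 ≤ f * (b+1) := Nat.one_le_iff_ne_zero.mpr (by positivity)
      omega
    | a+1, b =>
      rw [D, if_pos hab, Finset.card_union_of_disjoint (disj _ _),
        Finset.card_image_of_injective _ (append_inj _),
        Finset.card_image_of_injective _ (append_inj _)]
      by_cases h1 : f * (b+1) ≤ a
      · have IH1 := IH (a + b) (by omega) a b rfl h1
        match b with
        | 0 =>
          rw [card_D_a0]
          simp at IH1 ⊢
          omega
        | b+1 =>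
          have IH2 := IH (a + 1 + b) (by omega) (a+1) b rfl (by nlinarith)
          have p1 : Nat.choose (a+1+(b+1)+1) (b+2) =
              Nat.choose (a+b+2) (b+1) + Nat.choose (a+b+2) (b+2) := by
            have := Nat.choose_succ_succ (a+b+2) (b+1)
            convert this using 2 <;> omega
          have p2 : Nat.choose (a+1+(b+1)+1) (b+1) =
              Nat.choose (a+b+2) b + Nat.choose (a+b+2) (b+1) := by
            have := Nat.choose_succ_succ (a+b+2) b
            convert this using 2 <;> omega
          rw [p1, p2, Nat.mul_add]
          have e1 : a + (b+1) + 1 = a+b+2 := by omega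
          have e2 : a + 1 + b + 1 = a+b+2 := by omega
          rw [e1] at IH1
          rw [e2] at IH2
          have hC : Nat.choose (a+b+2) (b+1+1) = Nat.choose (a+b+2) (b+2) := rfl
          omega
      · -- f * (b+1) = a+1
        have heq : f * (b+1) = a + 1 := by omega
        have hD1 : D f a (b+1) = ∅ := D_empty (a + (b+1)) a (b+1) rfl h1
        rw [hD1, Finset.card_empty, Nat.zero_add]
        -- key identity : C(a+b+1, b+1) = f * C(a+b+1, b)
        have key : Nat.choose (a+b+1) (b+1) = f * Nat.choose (a+b+1) b := by
          have h := Nat.choose_succ_right_eq (a+b+1) b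
          have hnb : a + b + 1 - b = f * (b+1) := by omega
          rw [hnb] at h
          have : Nat.choose (a+b+1) (b+1) * (b+1) = (f * Nat.choose (a+b+1) b) * (b+1) := by
            rw [h]; ring
          exact Nat.eq_of_mul_eq_mul_right (by omega) this
        match b with
        | 0 =>
          rw [card_D_a0]
          simp
          omega
        | b+1 =>
          have IH2 := IH (a + 1 + b) (by omega) (a+1) b rfl (by nlinarith)
          have p1 : Nat.choose (a+1+(b+1)+1) (b+2) =
              Nat.choose (a+b+2) (b+1) + Nat.choose (a+b+2) (b+2) := by
            have := Nat.choose_succ_succ (a+b+2) (b+1)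
            convert this using 2 <;> omega
          have p2 : Nat.choose (a+1+(b+1)+1) (b+1) =
              Nat.choose (a+b+2) b + Nat.choose (a+b+2) (b+1) := by
            have := Nat.choose_succ_succ (a+b+2) b
            convert this using 2 <;> omega
          rw [p1, p2, Nat.mul_add]
          have e2 : a + 1 + b + 1 = a+b+2 := by omega
          rw [e2] at IH2
          have key' : Nat.choose (a+b+2) (b+2) = f * Nat.choose (a+b+2) (b+1) := by
            have : a + (b+1) + 1 = a + b + 2 := by omega
            rw [this] at key
            exact key
          have hC : Nat.choose (a+b+2) (b+1+1) = Nat.choose (a+b+2) (b+2) := rfl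
          omega

end Fuss

theorem fuss_catalan_count_of_paths (k f : ℕ) (hf : 1 ≤ f) :
    Set.ncard {l : List (ℕ × ℕ) | IsLatticePath {(1,0), (0,1)} 1 f (f * k, k) l} =
      Nat.choose ((f + 1) * k) k / (f * k + 1) := by
  have hset : {l : List (ℕ × ℕ) | IsLatticePath {(1,0), (0,1)} 1 f (f * k, k) l} =
      ↑(Fuss.D f (f*k) k) := by
    ext l
    simp only [Set.mem_setOf_eq, Finset.coe_sort_coe, Finset.mem_coe]
    exact (Fuss.mem_D_iff hf (f*k + k) (f*k) k rfl l).symm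
  rw [hset, Set.ncard_coe_finset]
  match k with
  | 0 =>
    simp [Fuss.D]
  | k+1 =>
    have hend : f * (k+1) ≤ f * (k+1) := le_rfl
    have hcard := Fuss.card_D hf (f*(k+1) + k) (f*(k+1)) k rfl hend
    set n := f*(k+1) + k + 1 with hn
    have hn2 : (f+1) * (k+1) = n := by ring
    rw [hn2]
    have hid := Nat.choose_succ_right_eq n k
    have hsub : n - k = f * (k+1) + 1 := by omega
    rw [hsub] at hid
    -- hid : C(n, k+1) * (k+1) = C(n,k) * (f*(k+1)+1)
    -- hcard : card + f * C(n-?,k) = C(n, k+1); indices: a+b+1 = f*(k+1)+k+1 = n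
    -- Show (f*(k+1)+1) * card = C(n, k+1)
    have hmain : (f * (k+1) + 1) * (Fuss.D f (f*(k+1)) (k+1)).card = Nat.choose n (k+1) := by
      have h1 : (f * (k+1) + 1) * ((Fuss.D f (f*(k+1)) (k+1)).card + f * Nat.choose n k)
          = (f * (k+1) + 1) * Nat.choose n (k+1) := by rw [hcard]
      have h2 : (f * (k+1) + 1) * (f * Nat.choose n k) = f * ((f*(k+1)+1) * Nat.choose n k) := by
        ring
      have h3 : (f*(k+1)+1) * Nat.choose n k = (k+1) * Nat.choose n (k+1) := by
        nlinarith [hid]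
      nlinarith [h1, h2, h3]
    rw [← hmain, Nat.mul_div_cancel_left _ (by omega)]
end

section
/- Let y = y(x) be the formal power series over ℚ(a) (in variable x) uniquely determined by y(0) = 1 and the algebraic equation 1 − y + a²·x·y^f + x·y^{f+1} = 0, for a fixed positive integer f. Then every coefficient of y(x) lies in ℕ[a²]; in particular at a = 1 the coefficients of y for f = 1 are 1, 2, 6, 22, 90, … and for f = 2 are 1, 2, 10, 66, 498, …. -/
noncomputable section

open PowerSeries

/-- The constant power series whose value is the polynomial `a ^ n`. -/
def Ca (n : ℕ) : PowerSeries (Polynomial ℚ) := PowerSeries.C (Polynomial.X ^ n)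

/-!
Reading the equation coefficientwise gives the recurrence
`[xⁿ⁺¹] y = a² · [xⁿ] y^f + [xⁿ] y^(f+1)`, whose right-hand side only involves
coefficients of `y` of index at most `n`. Every subsemiring containing `a²` is closed under
the operations appearing there, so by strong induction all coefficients lie in `ℕ[a²]`.
At `a = 1` the same recurrence computes the listed numbers.
-/

theorem PowerSeries.coeff_pow_mem_of_forall_le {R : Type*} [CommSemiring R] {S : Subsemiring R}
    {φ : R⟦X⟧} {n : ℕ} (h : ∀ i ≤ n, coeff i φ ∈ S) (k : ℕ) : coeff n (φ ^ k) ∈ S := by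
  rw [coeff_pow]
  refine S.sum_mem fun l hl => S.prod_mem fun i hi => h _ ?_
  rw [Finset.mem_finsuppAntidiag] at hl
  exact hl.1 ▸ Finset.single_le_sum (fun _ _ => Nat.zero_le _) hi

section Equation

variable {R : Type*} [CommRing R] {c : R} {f : ℕ} {y : R⟦X⟧}

theorem coeff_succ_eq_of_equation (h : 1 - y + C c * X * y ^ f + X * y ^ (f + 1) = 0) (n : ℕ) :
    coeff (n + 1) y = c * coeff n (y ^ f) + coeff n (y ^ (f + 1)) := by
  have h' := congrArg (coeff (n + 1)) h
  rw [mul_assoc, mul_comm (C c)] at h'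
  simp [coeff_one, mul_assoc, coeff_succ_X_mul] at h'
  linear_combination -h'

theorem coeff_mem_of_equation {S : Subsemiring R} (hc : c ∈ S) (h0 : constantCoeff y = 1)
    (h : 1 - y + C c * X * y ^ f + X * y ^ (f + 1) = 0) (n : ℕ) : coeff n y ∈ S := by
  induction n using Nat.strong_induction_on with
  | _ n ih =>
    cases n with
    | zero => simp [h0]
    | succ n =>
      have hle : ∀ i ≤ n, coeff i y ∈ S := fun i hi => ih i (Nat.lt_succ_of_le hi)
      rw [coeff_succ_eq_of_equation h]
      exact S.add_mem (S.mul_mem hc (coeff_pow_mem_of_forall_le hle f))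
        (coeff_pow_mem_of_forall_le hle (f + 1))

theorem map_equation {T : Type*} [CommRing T] (φ : R →+* T)
    (h : 1 - y + C c * X * y ^ f + X * y ^ (f + 1) = 0) :
    1 - map φ y + C (φ c) * X * map φ y ^ f + X * map φ y ^ (f + 1) = 0 := by
  simpa using congrArg (map φ) h

end Equation

/-- `ℕ[a²]`, as a subsemiring of `ℚ[a]`. -/
def natPolynomialsInSq : Subsemiring (Polynomial ℚ) :=
  ((Polynomial.mapRingHom (Nat.castRingHom ℚ)).comp (Polynomial.expand ℕ 2).toRingHom).rangeS

theorem X_sq_mem_natPolynomialsInSq : (Polynomial.X ^ 2 : Polynomial ℚ) ∈ natPolynomialsInSq :=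
  ⟨Polynomial.X, by simp⟩

theorem coeff_of_mem_natPolynomialsInSq {p : Polynomial ℚ} (hp : p ∈ natPolynomialsInSq) (k : ℕ) :
    p.coeff (2 * k + 1) = 0 ∧ ∃ m : ℕ, p.coeff (2 * k) = m := by
  obtain ⟨q, rfl⟩ := hp
  simp [Polynomial.coeff_map, Polynomial.coeff_expand two_pos]

theorem coeff_of_equation_one {z : ℚ⟦X⟧} (h0 : constantCoeff z = 1)
    (h : 1 - z + X * z + X * z ^ 2 = 0) :
    coeff 0 z = 1 ∧ coeff 1 z = 2 ∧ coeff 2 z = 6 ∧ coeff 3 z = 22 ∧ coeff 4 z = 90 := by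
  have hrec := coeff_succ_eq_of_equation (c := (1 : ℚ)) (f := 1) (y := z) (by simpa using h)
  simp only [one_mul, pow_one] at hrec
  simp [hrec, h0, pow_two, coeff_mul, Finset.Nat.antidiagonal_succ]
  norm_num

theorem coeff_of_equation_two {z : ℚ⟦X⟧} (h0 : constantCoeff z = 1)
    (h : 1 - z + X * z ^ 2 + X * z ^ 3 = 0) :
    coeff 0 z = 1 ∧ coeff 1 z = 2 ∧ coeff 2 z = 10 ∧ coeff 3 z = 66 ∧ coeff 4 z = 498 := by
  have hrec := coeff_succ_eq_of_equation (c := (1 : ℚ)) (f := 2) (y := z) (by simpa using h)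
  simp only [one_mul] at hrec
  simp [hrec, h0, pow_succ, coeff_mul, Finset.Nat.antidiagonal_succ]
  norm_num

theorem framed_unknot_A_polynomial_solution_general (f : ℕ)
    (y : PowerSeries (Polynomial ℚ))
    (h0 : PowerSeries.constantCoeff y = 1)
    (heq : 1 - y + Ca 2 * PowerSeries.X * y ^ f + PowerSeries.X * y ^ (f + 1) = 0) :
    (∀ n k : ℕ,
      (PowerSeries.coeff n y).coeff (2 * k + 1) = 0 ∧
      ∃ m : ℕ, (PowerSeries.coeff n y).coeff (2 * k) = (m : ℚ)) ∧
    (f = 1 →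
      Polynomial.eval 1 (PowerSeries.coeff 0 y) = 1 ∧
      Polynomial.eval 1 (PowerSeries.coeff 1 y) = 2 ∧
      Polynomial.eval 1 (PowerSeries.coeff 2 y) = 6 ∧
      Polynomial.eval 1 (PowerSeries.coeff 3 y) = 22 ∧
      Polynomial.eval 1 (PowerSeries.coeff 4 y) = 90) ∧
    (f = 2 →
      Polynomial.eval 1 (PowerSeries.coeff 0 y) = 1 ∧
      Polynomial.eval 1 (PowerSeries.coeff 1 y) = 2 ∧
      Polynomial.eval 1 (PowerSeries.coeff 2 y) = 10 ∧
      Polynomial.eval 1 (PowerSeries.coeff 3 y) = 66 ∧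
      Polynomial.eval 1 (PowerSeries.coeff 4 y) = 498) := by
  have heval := map_equation (Polynomial.evalRingHom 1) heq
  have hcoeff (n : ℕ) :
      Polynomial.eval 1 (coeff n y) = coeff n (map (Polynomial.evalRingHom 1) y) := by
    rw [coeff_map, Polynomial.coe_evalRingHom]
  have heval0 : constantCoeff (map (Polynomial.evalRingHom 1) y) = 1 := by
    rw [← coeff_zero_eq_constantCoeff_apply, ← hcoeff, coeff_zero_eq_constantCoeff_apply, h0,
      Polynomial.eval_one]
  refine ⟨fun n => coeff_of_mem_natPolynomialsInSq
      (coeff_mem_of_equation X_sq_mem_natPolynomialsInSq h0 heq n), ?_, ?_⟩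
  · rintro rfl
    simpa only [hcoeff] using coeff_of_equation_one heval0 (by simpa using heval)
  · rintro rfl
    simpa only [hcoeff] using coeff_of_equation_two heval0 (by simpa using heval)

theorem framed_unknot_A_polynomial_solution (f : ℕ) (hf : 1 ≤ f)
    (y : PowerSeries (Polynomial ℚ))
    (h0 : PowerSeries.constantCoeff y = 1)
    (heq : 1 - y + Ca 2 * PowerSeries.X * y ^ f + PowerSeries.X * y ^ (f + 1) = 0) :
    (∀ n k : ℕ,
      (PowerSeries.coeff n y).coeff (2 * k + 1) = 0 ∧
      ∃ m : ℕ, (PowerSeries.coeff n y).coeff (2 * k) = (m : ℚ)) ∧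
    (f = 1 →
      Polynomial.eval 1 (PowerSeries.coeff 0 y) = 1 ∧
      Polynomial.eval 1 (PowerSeries.coeff 1 y) = 2 ∧
      Polynomial.eval 1 (PowerSeries.coeff 2 y) = 6 ∧
      Polynomial.eval 1 (PowerSeries.coeff 3 y) = 22 ∧
      Polynomial.eval 1 (PowerSeries.coeff 4 y) = 90) ∧
    (f = 2 →
      Polynomial.eval 1 (PowerSeries.coeff 0 y) = 1 ∧
      Polynomial.eval 1 (PowerSeries.coeff 1 y) = 2 ∧
      Polynomial.eval 1 (PowerSeries.coeff 2 y) = 10 ∧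
      Polynomial.eval 1 (PowerSeries.coeff 3 y) = 66 ∧
      Polynomial.eval 1 (PowerSeries.coeff 4 y) = 498) :=
  framed_unknot_A_polynomial_solution_general f y h0 heq

end
end
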